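/- arXiv:1003.0017 — 2 statements merged into one kernel-verified Lean document; each statement's English description precedes it below -/
import Mathlib

section
/- For every integer k ≥ 1 and every z > 0, the steady-state densities satisfy the second-order ordinary differential equation 𝒜_k″(z) + ((n−1)/z) · 𝒜_k′(z) − 𝒜_k(z) + B · 𝒜_{k−1}(z) = 0, where primes denote derivatives with respect to z. -/
/-!
Up to a constant factor, `𝒜_k` is `J_a(z) = ∫₀^∞ s^a exp(-λs - z²/(4λs)) ds` with `a = k - n/2`.
Differentiating under the integral sign gives `J_a' = -(z/2λ) J_{a-1}`, and integrating
`d/ds [s^a exp(-λs - z²/(4λs))]` over `(0, ∞)`, where the boundary terms vanish, gives the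
recurrence `a J_{a-1} - λ J_a + z²/(4λ) J_{a-2} = 0`. Together they yield
`J_a'' + ((ν-1)/z) J_a' - J_a + ((a + ν/2)/λ) J_{a-1} = 0` for every `ν`. For `ν = n` the last
coefficient is `k/λ`, and the prefactors `c_k = μ(λB)^k / (k!(4πD)^{n/2})` satisfy
`c_k · k/λ = B c_{k-1}`, so the last term is `B 𝒜_{k-1}`.
-/

open Real MeasureTheory Set

/-- The steady-state generation-`k` density in the normalized distance
`z = |x|√(λ/D)` from the origin:
`𝒜_k(z) = (μ(λB)^k/(k!(4πD)^{n/2})) ∫₀^∞ s^{k−n/2} exp(−λs − z²/(4λs)) ds`. -/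
noncomputable def steadyDensity (n : ℕ) (lam D B mu : ℝ) (k : ℕ) (z : ℝ) : ℝ :=
  (mu * (lam * B) ^ k / ((Nat.factorial k : ℝ) * (4 * π * D) ^ ((n : ℝ) / 2))) *
    ∫ s in Set.Ioi (0:ℝ),
      s ^ ((k : ℝ) - (n : ℝ) / 2) * Real.exp (-lam * s - z ^ 2 / (4 * lam * s))

open Filter Topology
open scoped Nat

lemma pow_mul_exp_neg_mul_le {x b : ℝ} (hx : 0 ≤ x) (hb : 0 < b) (m : ℕ) :
    x ^ m * exp (-b * x) ≤ m ! / b ^ m := by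
  have h := Real.pow_div_factorial_le_exp (b * x) (mul_nonneg hb.le hx) m
  rw [div_le_iff₀ (by positivity), mul_pow] at h
  rw [le_div_iff₀ (by positivity), neg_mul, exp_neg]
  calc x ^ m * (exp (b * x))⁻¹ * b ^ m = b ^ m * x ^ m * (exp (b * x))⁻¹ := by ring
    _ ≤ exp (b * x) * m ! * (exp (b * x))⁻¹ := by gcongr
    _ = m ! := by field_simp

lemma rpow_le_pow_add_inv_pow {s a : ℝ} (hs : 0 < s) {m : ℕ} (hm : |a| ≤ m) :
    s ^ a ≤ s ^ m + s⁻¹ ^ m := by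
  rcases le_total 1 s with h1 | h1
  · have : s ^ a ≤ s ^ m := by
      rw [← rpow_natCast]
      exact rpow_le_rpow_of_exponent_le h1 ((le_abs_self a).trans hm)
    linarith [pow_nonneg (inv_nonneg.2 hs.le) m]
  · have : s ^ a ≤ s⁻¹ ^ m := by
      rw [← rpow_natCast, inv_rpow hs.le, ← rpow_neg hs.le]
      exact rpow_le_rpow_of_exponent_ge hs h1 (by linarith [neg_abs_le a])
    linarith [pow_nonneg hs.le m]

lemma exists_rpow_mul_exp_neg_le (a : ℝ) {b c : ℝ} (hb : 0 < b) (hc : 0 < c) :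
    ∃ M, ∀ s > 0, s ^ a * exp (-b * s - c / s) ≤ M := by
  obtain ⟨m, hm⟩ := exists_nat_ge |a|
  refine ⟨m ! / b ^ m + m ! / c ^ m, fun s hs => ?_⟩
  have hb1 : exp (-b * s) ≤ 1 := exp_le_one_iff.2 (by nlinarith)
  have hc1 : exp (-c * s⁻¹) ≤ 1 := exp_le_one_iff.2 (by nlinarith [inv_pos.2 hs])
  calc s ^ a * exp (-b * s - c / s)
      ≤ (s ^ m + s⁻¹ ^ m) * (exp (-b * s) * exp (-c * s⁻¹)) := by
        rw [← exp_add, div_eq_mul_inv, neg_mul c, ← sub_eq_add_neg]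
        gcongr
        exact rpow_le_pow_add_inv_pow hs hm
    _ ≤ s ^ m * exp (-b * s) + s⁻¹ ^ m * exp (-c * s⁻¹) := by
        rw [add_mul]
        gcongr
        · exact mul_le_of_le_one_right (by positivity) hc1
        · exact mul_le_of_le_one_left (by positivity) hb1
    _ ≤ m ! / b ^ m + m ! / c ^ m := by
        gcongr
        · exact pow_mul_exp_neg_mul_le hs.le hb m
        · exact pow_mul_exp_neg_mul_le (inv_nonneg.2 hs.le) hc m

lemma integral_Ioi_of_hasDerivAt_of_tendsto_nhdsGT {f f' : ℝ → ℝ} {a l m : ℝ}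
    (hderiv : ∀ x ∈ Ioi a, HasDerivAt f (f' x) x) (hint : IntegrableOn f' (Ioi a))
    (ha : Tendsto f (𝓝[>] a) (𝓝 l)) (htop : Tendsto f atTop (𝓝 m)) :
    ∫ x in Ioi a, f' x = m - l := by
  have h1 : f * (fun _ => (1 : ℝ)) = f := by ext; simp
  have h2 : f' * (fun _ => (1 : ℝ)) + f * (fun _ => 0) = f' := by ext; simp
  have := integral_Ioi_deriv_mul_eq_sub hderiv (fun x _ => hasDerivAt_const x (1 : ℝ))
    (by rwa [h2]) (by rwa [h1]) (by rwa [h1])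
  simpa using this

noncomputable def macdonaldIntegrand (lam a z s : ℝ) : ℝ :=
  s ^ a * exp (-lam * s - z ^ 2 / (4 * lam * s))

-- `macdonaldIntegral λ a z = 2 (z/(2λ))^(a+1) K_{a+1}(z)` with `K` the Macdonald function.
noncomputable def macdonaldIntegral (lam a z : ℝ) : ℝ :=
  ∫ s in Ioi 0, macdonaldIntegrand lam a z s

section macdonald

variable {lam : ℝ}

lemma macdonaldIntegrand_nonneg (a z : ℝ) {s : ℝ} (hs : 0 < s) :
    0 ≤ macdonaldIntegrand lam a z s := by
  unfold macdonaldIntegrand; positivity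

lemma macdonaldIntegrand_eq_mul_exp (hlam : lam ≠ 0) (a z : ℝ) {s : ℝ} (hs : 0 < s) :
    macdonaldIntegrand lam a z s =
      s ^ a * exp (-(lam / 2) * s - z ^ 2 / (4 * lam) / s) * exp (-(lam / 2) * s) := by
  rw [macdonaldIntegrand, mul_assoc (s ^ a), ← exp_add]
  congr 2
  field_simp
  ring

lemma exists_macdonaldIntegrand_le (hlam : 0 < lam) (a : ℝ) {z : ℝ} (hz : z ≠ 0) :
    ∃ M, ∀ s > 0, macdonaldIntegrand lam a z s ≤ M * exp (-(lam / 2) * s) := by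
  obtain ⟨M, hM⟩ := exists_rpow_mul_exp_neg_le a (half_pos hlam)
    (show 0 < z ^ 2 / (4 * lam) by positivity)
  refine ⟨M, fun s hs => ?_⟩
  rw [macdonaldIntegrand_eq_mul_exp hlam.ne' a z hs]
  gcongr
  exact hM s hs

lemma continuousOn_macdonaldIntegrand (hlam : lam ≠ 0) (a z : ℝ) :
    ContinuousOn (macdonaldIntegrand lam a z) (Ioi 0) := by
  intro s hs
  have hs : s ≠ 0 := (mem_Ioi.1 hs).ne'
  apply ContinuousAt.continuousWithinAt
  unfold macdonaldIntegrand
  fun_prop (disch := simp [*])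

lemma integrableOn_macdonaldIntegrand (hlam : 0 < lam) (a : ℝ) {z : ℝ} (hz : z ≠ 0) :
    IntegrableOn (macdonaldIntegrand lam a z) (Ioi 0) := by
  obtain ⟨M, hM⟩ := exists_macdonaldIntegrand_le hlam a hz
  refine Integrable.mono' ((exp_neg_integrableOn_Ioi 0 (half_pos hlam)).const_mul M)
    ((continuousOn_macdonaldIntegrand hlam.ne' a z).aestronglyMeasurable measurableSet_Ioi) ?_
  filter_upwards [ae_restrict_mem measurableSet_Ioi] with s hs
  rw [Real.norm_of_nonneg (macdonaldIntegrand_nonneg a z hs)]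
  exact hM s hs

lemma hasDerivAt_macdonaldIntegrand_time (hlam : lam ≠ 0) (a z : ℝ) {s : ℝ} (hs : 0 < s) :
    HasDerivAt (macdonaldIntegrand lam a z)
      (a * macdonaldIntegrand lam (a - 1) z s - lam * macdonaldIntegrand lam a z s
        + z ^ 2 / (4 * lam) * macdonaldIntegrand lam (a - 2) z s) s := by
  have hexp : HasDerivAt (fun t => -lam * t - z ^ 2 / (4 * lam * t))
      (-lam * 1 - (0 * (4 * lam * s) - z ^ 2 * (4 * lam * 1)) / (4 * lam * s) ^ 2) s :=
    ((hasDerivAt_id s).const_mul _).sub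
      ((hasDerivAt_const s _).div ((hasDerivAt_id s).const_mul _) (by positivity))
  refine ((hasDerivAt_rpow_const (p := a) (Or.inl hs.ne')).mul hexp.exp).congr_deriv ?_
  simp only [macdonaldIntegrand, rpow_sub hs, rpow_one, rpow_two]
  field_simp
  ring

lemma hasDerivAt_macdonaldIntegrand_dist (a : ℝ) {s : ℝ} (hs : 0 < s) (z : ℝ) :
    HasDerivAt (fun w => macdonaldIntegrand lam a w s)
      (-(z / (2 * lam)) * macdonaldIntegrand lam (a - 1) z s) z := by
  have hexp : HasDerivAt (fun w => -lam * s - w ^ 2 / (4 * lam * s))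
      (0 - (2 * z ^ 1 * 1) / (4 * lam * s)) z :=
    (hasDerivAt_const z _).sub (((hasDerivAt_id z).pow 2).div_const _)
  refine (hexp.exp.const_mul (s ^ a)).congr_deriv ?_
  simp only [macdonaldIntegrand, rpow_sub hs, rpow_one]
  field_simp
  ring

lemma macdonaldIntegrand_le_of_sq_le (hlam : 0 < lam) (a : ℝ) {s : ℝ} (hs : 0 < s) {w z : ℝ}
    (h : z ^ 2 ≤ w ^ 2) : macdonaldIntegrand lam a w s ≤ macdonaldIntegrand lam a z s := by
  unfold macdonaldIntegrand
  gcongr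

lemma macdonaldIntegral_recurrence (hlam : 0 < lam) (a : ℝ) {z : ℝ} (hz : z ≠ 0) :
    a * macdonaldIntegral lam (a - 1) z - lam * macdonaldIntegral lam a z
      + z ^ 2 / (4 * lam) * macdonaldIntegral lam (a - 2) z = 0 := by
  set f := macdonaldIntegrand lam
  have hint (b : ℝ) : IntegrableOn (f b z) (Ioi 0) := integrableOn_macdonaldIntegrand hlam b hz
  have hderiv : ∀ s ∈ Ioi (0 : ℝ), HasDerivAt (f a z)
      (a * f (a - 1) z s - lam * f a z s + z ^ 2 / (4 * lam) * f (a - 2) z s) s :=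
    fun s hs => hasDerivAt_macdonaldIntegrand_time hlam.ne' a z hs
  have hderiv_int : IntegrableOn
      (fun s => a * f (a - 1) z s - lam * f a z s + z ^ 2 / (4 * lam) * f (a - 2) z s) (Ioi 0) :=
    (((hint _).const_mul _).sub ((hint _).const_mul _)).add ((hint _).const_mul _)
  have hzero : Tendsto (f a z) (𝓝[>] 0) (𝓝 0) := by
    obtain ⟨M, hM⟩ := exists_macdonaldIntegrand_le hlam (a - 1) hz
    have hbound : Tendsto (fun s => s * (M * exp (-(lam / 2) * s))) (𝓝[>] 0) (𝓝 0) :=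
      ((Continuous.tendsto' (by fun_prop) 0 0 (by simp)).mono_left nhdsWithin_le_nhds)
    refine squeeze_zero' ?_ ?_ hbound
    · filter_upwards [self_mem_nhdsWithin] with s hs
      exact macdonaldIntegrand_nonneg a z hs
    · filter_upwards [self_mem_nhdsWithin] with s (hs : 0 < s)
      have : f a z s = s * f (a - 1) z s := by
        simp only [f, macdonaldIntegrand, rpow_sub_one hs.ne']
        field_simp
      rw [this]
      exact mul_le_mul_of_nonneg_left (hM s hs) hs.le
  have htop : Tendsto (f a z) atTop (𝓝 0) :=
    tendsto_zero_of_hasDerivAt_of_integrableOn_Ioi hderiv hderiv_int (hint a)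
  have hftc := integral_Ioi_of_hasDerivAt_of_tendsto_nhdsGT hderiv hderiv_int hzero htop
  rwa [sub_self, integral_add, integral_sub, integral_const_mul, integral_const_mul,
    integral_const_mul] at hftc
  all_goals first
    | exact (hint _).const_mul _
    | exact ((hint _).const_mul _).sub ((hint _).const_mul _)

lemma hasDerivAt_macdonaldIntegral (hlam : 0 < lam) (a : ℝ) {z : ℝ} (hz : 0 < z) :
    HasDerivAt (macdonaldIntegral lam a)
      (-(z / (2 * lam)) * macdonaldIntegral lam (a - 1) z) z := by
  have hmeas (b w : ℝ) : AEStronglyMeasurable (macdonaldIntegrand lam b w)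
      (volume.restrict (Ioi 0)) :=
    (continuousOn_macdonaldIntegrand hlam.ne' b w).aestronglyMeasurable measurableSet_Ioi
  have hdom : ∀ᵐ s ∂(volume.restrict (Ioi 0)), ∀ w ∈ Metric.ball z (z / 2),
      ‖-(w / (2 * lam)) * macdonaldIntegrand lam (a - 1) w s‖
        ≤ z / lam * macdonaldIntegrand lam (a - 1) (z / 2) s := by
    filter_upwards [ae_restrict_mem measurableSet_Ioi] with s (hs : 0 < s) w hw
    rw [Metric.mem_ball, Real.dist_eq, abs_lt] at hw
    have hw0 : 0 < w := by linarith
    rw [norm_mul, norm_neg, Real.norm_of_nonneg (by positivity),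
      Real.norm_of_nonneg (macdonaldIntegrand_nonneg _ _ hs)]
    refine mul_le_mul ?_ (macdonaldIntegrand_le_of_sq_le hlam _ hs (by nlinarith))
      (macdonaldIntegrand_nonneg _ _ hs) (by positivity)
    rw [div_le_div_iff₀ (by positivity) hlam]
    nlinarith
  have h := hasDerivAt_integral_of_dominated_loc_of_deriv_le (Metric.ball_mem_nhds z (half_pos hz))
    (Eventually.of_forall (hmeas a)) (integrableOn_macdonaldIntegrand hlam a hz.ne')
    ((hmeas (a - 1) z).const_mul _) hdom
    ((integrableOn_macdonaldIntegrand hlam (a - 1) (half_pos hz).ne').const_mul _)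
    (by filter_upwards [ae_restrict_mem measurableSet_Ioi] with s hs w _
        using hasDerivAt_macdonaldIntegrand_dist a hs w)
  rw [macdonaldIntegral, ← integral_const_mul]
  exact h.2

theorem macdonaldIntegral_ode (hlam : 0 < lam) (a ν : ℝ) {z : ℝ} (hz : 0 < z) :
    deriv (deriv (macdonaldIntegral lam a)) z
      + (ν - 1) / z * deriv (macdonaldIntegral lam a) z - macdonaldIntegral lam a z
      + (a + ν / 2) / lam * macdonaldIntegral lam (a - 1) z = 0 := by
  have hderiv : deriv (macdonaldIntegral lam a)
      =ᶠ[𝓝 z] fun w => -(w / (2 * lam)) * macdonaldIntegral lam (a - 1) w := by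
    filter_upwards [Ioi_mem_nhds hz] with w hw
    exact (hasDerivAt_macdonaldIntegral hlam a hw).deriv
  have hderiv2 := ((hasDerivAt_id' z).div_const (2 * lam)).fun_neg.fun_mul
    (hasDerivAt_macdonaldIntegral hlam (a - 1) hz)
  rw [show a - 1 - 1 = a - 2 by ring] at hderiv2
  rw [hderiv.deriv_eq, hderiv2.deriv, (hasDerivAt_macdonaldIntegral hlam a hz).deriv]
  have hrec := macdonaldIntegral_recurrence hlam a hz.ne'
  field_simp at hrec ⊢
  linear_combination hrec

end macdonald

noncomputable def steadyCoeff (n : ℕ) (lam D B mu : ℝ) (k : ℕ) : ℝ :=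
  mu * (lam * B) ^ k / (k ! * (4 * π * D) ^ ((n : ℝ) / 2))

lemma steadyDensity_eq (n : ℕ) (lam D B mu : ℝ) (k : ℕ) :
    steadyDensity n lam D B mu k
      = fun z => steadyCoeff n lam D B mu k * macdonaldIntegral lam (k - n / 2) z :=
  rfl

lemma steadyCoeff_succ_mul (n : ℕ) {lam : ℝ} (hlam : lam ≠ 0) (D B mu : ℝ) (k : ℕ) :
    steadyCoeff n lam D B mu (k + 1) * ((k + 1 : ℕ) / lam) = B * steadyCoeff n lam D B mu k := by
  rw [steadyCoeff, steadyCoeff, Nat.factorial_succ, Nat.cast_mul, mul_assoc, ← div_div]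
  field_simp
  ring

theorem steadyDensity_ode_general
    (n : ℕ) (lam D B mu : ℝ)
    (hlam : 0 < lam)
    (k : ℕ) (hk : 1 ≤ k) (z : ℝ) (hz : 0 < z) :
    deriv (deriv (steadyDensity n lam D B mu k)) z
      + ((n : ℝ) - 1) / z * deriv (steadyDensity n lam D B mu k) z
      - steadyDensity n lam D B mu k z
      + B * steadyDensity n lam D B mu (k - 1) z = 0 := by
  obtain ⟨m, rfl⟩ : ∃ m, k = m + 1 := ⟨k - 1, by omega⟩
  have hode := macdonaldIntegral_ode hlam ((m + 1 : ℕ) - n / 2) n hz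
  rw [show ((m + 1 : ℕ) : ℝ) - n / 2 - 1 = m - n / 2 by push_cast; ring,
    sub_add_cancel] at hode
  rw [steadyDensity_eq, steadyDensity_eq, Nat.add_sub_cancel, deriv_const_mul_field',
    deriv_const_mul_field']
  linear_combination steadyCoeff n lam D B mu (m + 1) * hode
    - macdonaldIntegral lam (m - n / 2) z * steadyCoeff_succ_mul n hlam.ne' D B mu m

/-- For `k ≥ 1` and `z > 0` the steady-state densities satisfy
`𝒜_k″(z) + ((n−1)/z) 𝒜_k′(z) − 𝒜_k(z) + B 𝒜_{k−1}(z) = 0`. -/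
theorem steadyDensity_ode
    (n : ℕ) (hn : 1 ≤ n) (lam D B mu : ℝ)
    (hlam : 0 < lam) (hD : 0 < D) (hB : 0 < B) (hmu : 0 < mu)
    (k : ℕ) (hk : 1 ≤ k) (z : ℝ) (hz : 0 < z) :
    deriv (deriv (steadyDensity n lam D B mu k)) z
      + ((n : ℝ) - 1) / z * deriv (steadyDensity n lam D B mu k) z
      - steadyDensity n lam D B mu k z
      + B * steadyDensity n lam D B mu (k - 1) z = 0 :=
  steadyDensity_ode_general n lam D B mu hlam k hk z hz
end

section
/- Suppose the integer k ≥ 0 satisfies ν := k − n/2 + 1 ≤ 0 (so n ≥ 2). Then the ratio of consecutive generation densities diverges at the origin: γ_k(z) → ∞ as z → 0⁺. -/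
open Real MeasureTheory Set Filter Topology

/-- The consecutive-generation ratio `γ_k(z) = 𝒜_k(z)/𝒜_{k+1}(z)`. -/
noncomputable def genRatio (n : ℕ) (lam D B mu : ℝ) (k : ℕ) (z : ℝ) : ℝ :=
  steadyDensity n lam D B mu k z / steadyDensity n lam D B mu (k + 1) z

/-!
Write `c = z²/(4λ)` and `a = k − n/2`, so that `𝒜_k(z)` is a constant multiple of
`J_a(c) = gigIntegral λ c a = ∫₀^∞ s^a e^{−λs − c/s} ds` and
`γ_k = (k+1)/(λB) · J_a(c)/J_{a+1}(c)`.
Splitting `J_{a+1}` at `δ` gives `J_{a+1}(c) ≤ δ J_a(c) + C_δ` with `C_δ` independent of `c`,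
while for `a ≤ −1` the bound `J_a(c) ≥ e^{−λ−1} log(1/c)` (integrate over `[c, 1]`) shows
`J_a(c) → ∞`. Hence `J_{a+1}/J_a` is eventually below `2δ` for every `δ > 0`.
-/

noncomputable section

def gigKernel (lam c a s : ℝ) : ℝ :=
  s ^ a * exp (-lam * s - c / s)

/-- `2 (c/λ)^{(a+1)/2} K_{a+1}(2√(λc))`, the normalising constant of the generalized inverse
Gaussian distribution. -/
def gigIntegral (lam c a : ℝ) : ℝ :=
  ∫ s in Ioi 0, gigKernel lam c a s

end

open scoped Nat

lemma Real.exp_neg_le_factorial_div_pow {x : ℝ} (hx : 0 < x) (N : ℕ) :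
    exp (-x) ≤ N ! / x ^ N := by
  rw [exp_neg, ← inv_div]
  exact inv_anti₀ (by positivity) (pow_div_factorial_le_exp x hx.le N)

section gigKernel

variable {lam c a s : ℝ}

lemma gigKernel_pos (hs : 0 < s) : 0 < gigKernel lam c a s := by
  unfold gigKernel
  have := rpow_pos_of_pos hs a
  positivity

lemma gigKernel_add_one (hs : 0 < s) :
    gigKernel lam c (a + 1) s = s * gigKernel lam c a s := by
  rw [gigKernel, gigKernel, rpow_add_one hs.ne']
  ring

lemma gigKernel_le_rpow_mul_exp (hc : 0 ≤ c) (hs : 0 < s) :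
    gigKernel lam c a s ≤ s ^ a * exp (-lam * s) := by
  unfold gigKernel
  gcongr
  linarith [div_nonneg hc hs.le]

lemma gigKernel_le_of_le_one (hlam : 0 ≤ lam) (hc : 0 < c) {N : ℕ} (haN : 0 ≤ a + N)
    (hs : s ∈ Ioc 0 1) : gigKernel lam c a s ≤ N ! / c ^ N := by
  obtain ⟨hs0, hs1⟩ := hs
  calc gigKernel lam c a s ≤ s ^ a * exp (-(c / s)) := by
        unfold gigKernel
        gcongr
        nlinarith
    _ ≤ s ^ a * (N ! / (c / s) ^ N) := by
        gcongr
        exact exp_neg_le_factorial_div_pow (by positivity) N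
    _ = s ^ (a + N) * (N ! / c ^ N) := by
        rw [rpow_add hs0, rpow_natCast, div_pow]
        field_simp
    _ ≤ N ! / c ^ N := by
        apply mul_le_of_le_one_left (by positivity)
        exact rpow_le_one hs0.le hs1 haN

lemma continuousOn_gigKernel :
    ContinuousOn (gigKernel lam c a) (Ioi 0) := by
  intro s (hs : 0 < s)
  have hs0 : s ≠ 0 := hs.ne'
  have : s ≠ 0 ∨ 0 ≤ a := Or.inl hs0
  exact ContinuousAt.continuousWithinAt (by unfold gigKernel; fun_prop (disch := assumption))

end gigKernel

section gigIntegral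

variable {lam c a : ℝ}

lemma integrableOn_gigKernel (hlam : 0 < lam) (hc : 0 < c) (a : ℝ) :
    IntegrableOn (gigKernel lam c a) (Ioi 0) := by
  have hmeas (t : Set ℝ) (ht : t ⊆ Ioi 0) (hmt : MeasurableSet t) :
      AEStronglyMeasurable (gigKernel lam c a) (volume.restrict t) :=
    (continuousOn_gigKernel.mono ht).aestronglyMeasurable hmt
  rw [← Ioc_union_Ioi_eq_Ioi zero_le_one]
  refine IntegrableOn.union ?_ ?_
  · have haN : 0 ≤ a + ⌈-a⌉₊ := by linarith [Nat.le_ceil (-a)]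
    refine Integrable.mono'
      (integrableOn_const (C := (⌈-a⌉₊ ! / c ^ ⌈-a⌉₊ : ℝ)) measure_Ioc_lt_top.ne)
      (hmeas _ Ioc_subset_Ioi_self measurableSet_Ioc) ?_
    filter_upwards [ae_restrict_mem measurableSet_Ioc] with s hs
    rw [norm_of_nonneg (gigKernel_pos hs.1).le]
    exact gigKernel_le_of_le_one hlam.le hc haN hs
  · have hdom : IntegrableOn (fun s : ℝ => s ^ max a 0 * exp (-lam * s)) (Ioi 0) := by
      simpa using integrableOn_rpow_mul_exp_neg_mul_rpow
        (lt_of_lt_of_le neg_one_lt_zero (le_max_right a 0)) zero_lt_one hlam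
    refine Integrable.mono' (hdom.mono_set (Ioi_subset_Ioi zero_le_one))
      (hmeas _ (Ioi_subset_Ioi zero_le_one) measurableSet_Ioi) ?_
    filter_upwards [ae_restrict_mem measurableSet_Ioi] with s (hs : 1 < s)
    rw [norm_of_nonneg (gigKernel_pos (by linarith)).le]
    calc gigKernel lam c a s ≤ s ^ a * exp (-lam * s) :=
          gigKernel_le_rpow_mul_exp hc.le (by linarith)
      _ ≤ s ^ max a 0 * exp (-lam * s) := by
          gcongr
          · exact hs.le
          · exact le_max_left a 0

lemma gigIntegral_pos (hlam : 0 < lam) (hc : 0 < c) (a : ℝ) : 0 < gigIntegral lam c a := by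
  have hnonneg : 0 ≤ᵐ[volume.restrict (Ioi 0)] gigKernel lam c a := by
    filter_upwards [ae_restrict_mem measurableSet_Ioi] with s hs using (gigKernel_pos hs).le
  rw [gigIntegral, setIntegral_pos_iff_support_of_nonneg_ae hnonneg
    (integrableOn_gigKernel hlam hc a)]
  have hsupp : Function.support (gigKernel lam c a) ∩ Ioi 0 = Ioi 0 :=
    inter_eq_right.2 fun s hs => (gigKernel_pos hs).ne'
  rw [hsupp, volume_Ioi]
  exact ENNReal.zero_lt_top

lemma exp_mul_neg_log_le_gigIntegral (hlam : 0 < lam) (hc : c ∈ Ioc 0 1) (ha : a ≤ -1) :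
    exp (-(lam + 1)) * -log c ≤ gigIntegral lam c a := by
  obtain ⟨hc0, hc1⟩ := hc
  have hinv : IntegrableOn (fun s : ℝ => exp (-(lam + 1)) * s⁻¹) (Ioc c 1) :=
    (continuousOn_const.mul (continuousOn_inv₀.mono fun s hs => (hc0.trans_le hs.1).ne')
      ).integrableOn_Icc.mono_set Ioc_subset_Icc_self
  calc exp (-(lam + 1)) * -log c = ∫ s in Ioc c 1, exp (-(lam + 1)) * s⁻¹ := by
        rw [← intervalIntegral.integral_of_le hc1, intervalIntegral.integral_const_mul,
          integral_inv_of_pos hc0 one_pos, one_div, log_inv]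
    _ ≤ ∫ s in Ioc c 1, gigKernel lam c a s := by
        refine setIntegral_mono_on hinv ((integrableOn_gigKernel hlam hc0 a).mono_set
          fun s hs => hc0.trans hs.1) measurableSet_Ioc fun s ⟨hcs, hs1⟩ => ?_
        have hs0 : 0 < s := hc0.trans hcs
        rw [gigKernel, mul_comm]
        gcongr
        · rw [← rpow_neg_one]
          exact rpow_le_rpow_of_exponent_ge hs0 hs1 ha
        · have : c / s ≤ 1 := (div_le_one hs0).2 hcs.le
          nlinarith
    _ ≤ gigIntegral lam c a := by
        refine setIntegral_mono_set (integrableOn_gigKernel hlam hc0 a) ?_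
          (Ioc_subset_Ioi_self.trans (Ioi_subset_Ioi hc0.le)).eventuallyLE
        filter_upwards [ae_restrict_mem measurableSet_Ioi] with s hs using (gigKernel_pos hs).le

lemma tendsto_gigIntegral_nhdsGT_zero (hlam : 0 < lam) (ha : a ≤ -1) :
    Tendsto (gigIntegral lam · a) (𝓝[>] 0) atTop := by
  have hlog : Tendsto (fun c => exp (-(lam + 1)) * -log c) (𝓝[>] 0) atTop :=
    (tendsto_neg_atBot_atTop.comp tendsto_log_nhdsGT_zero).const_mul_atTop (exp_pos _)
  refine tendsto_atTop_mono' _ ?_ hlog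
  filter_upwards [Ioc_mem_nhdsGT zero_lt_one] with c hc
    using exp_mul_neg_log_le_gigIntegral hlam hc ha

lemma gigIntegral_add_one_le (hlam : 0 < lam) (hc : 0 < c) (ha : a + 1 ≤ 0) {δ : ℝ}
    (hδ : 0 < δ) :
    gigIntegral lam c (a + 1) ≤
      δ * gigIntegral lam c a + δ ^ (a + 1) * ∫ s in Ioi δ, exp (-lam * s) := by
  have hint := integrableOn_gigKernel hlam hc
  rw [gigIntegral, ← Ioc_union_Ioi_eq_Ioi hδ.le, setIntegral_union Ioc_disjoint_Ioi_same
    measurableSet_Ioi ((hint _).mono_set Ioc_subset_Ioi_self)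
    ((hint _).mono_set (Ioi_subset_Ioi hδ.le))]
  gcongr
  · calc ∫ s in Ioc 0 δ, gigKernel lam c (a + 1) s
          ≤ ∫ s in Ioc 0 δ, δ * gigKernel lam c a s := by
          refine setIntegral_mono_on ((hint _).mono_set Ioc_subset_Ioi_self)
            (((hint a).mono_set Ioc_subset_Ioi_self).const_mul δ) measurableSet_Ioc
            fun s ⟨hs0, hsδ⟩ => ?_
          rw [gigKernel_add_one hs0]
          exact mul_le_mul_of_nonneg_right hsδ (gigKernel_pos hs0).le
      _ = δ * ∫ s in Ioc 0 δ, gigKernel lam c a s := integral_const_mul _ _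
      _ ≤ δ * gigIntegral lam c a := by
          gcongr
          refine setIntegral_mono_set (hint a) ?_ Ioc_subset_Ioi_self.eventuallyLE
          filter_upwards [ae_restrict_mem measurableSet_Ioi] with s hs
            using (gigKernel_pos hs).le
  · rw [← integral_const_mul]
    refine setIntegral_mono_on ((hint _).mono_set (Ioi_subset_Ioi hδ.le))
      ((exp_neg_integrableOn_Ioi δ hlam).const_mul _) measurableSet_Ioi fun s (hs : δ < s) => ?_
    calc gigKernel lam c (a + 1) s ≤ s ^ (a + 1) * exp (-lam * s) :=
          gigKernel_le_rpow_mul_exp hc.le (hδ.trans hs)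
      _ ≤ δ ^ (a + 1) * exp (-lam * s) :=
          mul_le_mul_of_nonneg_right (rpow_le_rpow_of_nonpos hδ hs.le ha) (exp_pos _).le

lemma tendsto_gigIntegral_div_nhdsGT_zero (hlam : 0 < lam) (ha : a + 1 ≤ 0) :
    Tendsto (fun c => gigIntegral lam c a / gigIntegral lam c (a + 1)) (𝓝[>] 0) atTop := by
  rw [tendsto_atTop]
  intro M
  set M' := max M 1
  have hM' : 0 < M' := zero_lt_one.trans_le (le_max_right M 1)
  set δ := (2 * M')⁻¹
  have hδ : 0 < δ := by positivity
  set C := δ ^ (a + 1) * ∫ s in Ioi δ, exp (-lam * s)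
  have hJ := tendsto_gigIntegral_nhdsGT_zero (a := a) hlam (by linarith)
  filter_upwards [hJ.eventually_ge_atTop (C / δ), self_mem_nhdsWithin] with c hJc (hc : 0 < c)
  have hC : C ≤ δ * gigIntegral lam c a := by
    rwa [div_le_iff₀ hδ, mul_comm] at hJc
  have hsplit := gigIntegral_add_one_le hlam hc ha hδ
  rw [le_div_iff₀ (gigIntegral_pos hlam hc _)]
  calc M * gigIntegral lam c (a + 1) ≤ M' * gigIntegral lam c (a + 1) := by
        gcongr
        · exact (gigIntegral_pos hlam hc _).le
        · exact le_max_left M 1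
    _ ≤ M' * (2 * δ * gigIntegral lam c a) := by gcongr; linarith
    _ = gigIntegral lam c a := by simp only [δ]; field_simp

end gigIntegral

lemma tendsto_sq_div_nhdsGT_zero {b : ℝ} (hb : 0 < b) :
    Tendsto (fun z : ℝ => z ^ 2 / b) (𝓝[>] 0) (𝓝[>] 0) := by
  refine tendsto_nhdsWithin_iff.2 ⟨?_, ?_⟩
  · have : Tendsto (fun z : ℝ => z ^ 2 / b) (𝓝 0) (𝓝 (0 ^ 2 / b)) :=
      ((continuous_pow 2).div_const b).tendsto 0
    simpa using this.mono_left nhdsWithin_le_nhds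
  · filter_upwards [self_mem_nhdsWithin] with z (hz : 0 < z)
    exact div_pos (pow_pos hz 2) hb

lemma steadyDensity_eq_mul_gigIntegral (n : ℕ) (lam D B mu : ℝ) (k : ℕ) (z : ℝ) :
    steadyDensity n lam D B mu k z =
      mu * (lam * B) ^ k / (k ! * (4 * π * D) ^ ((n : ℝ) / 2)) *
        gigIntegral lam (z ^ 2 / (4 * lam)) (k - n / 2) := by
  simp only [steadyDensity, gigIntegral, gigKernel, div_div]

lemma genRatio_eq_mul_gigIntegral_div {lam D B mu : ℝ} (hlam : lam ≠ 0) (hD : 0 < D)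
    (hB : B ≠ 0) (hmu : mu ≠ 0) (n k : ℕ) (z : ℝ) :
    genRatio n lam D B mu k z = (k + 1) / (lam * B) *
      (gigIntegral lam (z ^ 2 / (4 * lam)) (k - n / 2) /
        gigIntegral lam (z ^ 2 / (4 * lam)) (k - n / 2 + 1)) := by
  have hvol : (4 * π * D) ^ ((n : ℝ) / 2) ≠ 0 := (rpow_pos_of_pos (by positivity) _).ne'
  rw [genRatio, steadyDensity_eq_mul_gigIntegral, steadyDensity_eq_mul_gigIntegral,
    mul_div_mul_comm, Nat.factorial_succ]
  push_cast
  congr 1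
  · field_simp
    ring
  · ring_nf

theorem genRatio_diverges_at_origin_general
    (n : ℕ) (lam D B mu : ℝ)
    (hlam : 0 < lam) (hD : 0 < D) (hB : 0 < B) (hmu : 0 < mu)
    (k : ℕ) (hnu : (k : ℝ) - (n : ℝ) / 2 + 1 ≤ 0) :
    Filter.Tendsto (genRatio n lam D B mu k) (nhdsWithin 0 (Set.Ioi 0)) atTop := by
  have hratio := (tendsto_gigIntegral_div_nhdsGT_zero hlam hnu).comp
    (tendsto_sq_div_nhdsGT_zero (by positivity : 0 < 4 * lam))
  have hcoef : 0 < ((k : ℝ) + 1) / (lam * B) := by positivity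
  refine (hratio.const_mul_atTop hcoef).congr fun z => ?_
  exact (genRatio_eq_mul_gigIntegral_div hlam.ne' hD hB.ne' hmu.ne' n k z).symm

/-- If `ν = k − n/2 + 1 ≤ 0`, then `γ_k(z) → ∞` as `z → 0⁺`. -/
theorem genRatio_diverges_at_origin
    (n : ℕ) (hn : 1 ≤ n) (lam D B mu : ℝ)
    (hlam : 0 < lam) (hD : 0 < D) (hB : 0 < B) (hmu : 0 < mu)
    (k : ℕ) (hnu : (k : ℝ) - (n : ℝ) / 2 + 1 ≤ 0) :
    Filter.Tendsto (genRatio n lam D B mu k) (nhdsWithin 0 (Set.Ioi 0)) atTop :=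
  genRatio_diverges_at_origin_general n lam D B mu hlam hD hB hmu k hnu
end
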